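/- arXiv:1203.1871 — 4 statements merged into one kernel-verified Lean document; each statement's English description precedes it below -/
import Mathlib

section
/- Under the stability conditions ‖θ‖₁ < 1 and |ρ| < 1, the spectral radius of the companion matrix C_A of order p+1 (with first row (θ₁+ρ, θ₂−θ₁ρ, …, θ_p−θ_{p−1}ρ, −θ_p ρ) and ones on the subdiagonal) is strictly less than 1. -/
/-!
An eigenvector `v` of a matrix whose rows `1, …, n` shift coordinates is determined by its last
entry, `v j = μ ^ (n - j) * v n`, so the first row turns into the characteristic equation
`μ ^ (n + 1) = ∑ j, C 0 j * μ ^ (n - j)`. For `C_A` this equation factors as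
`(μ - ρ) * (μ ^ p - ∑ k, θ k * μ ^ (p - 1 - k)) = 0`. The first factor gives `|μ| = |ρ| < 1`;
for the second, `|μ| ≥ 1` would give `|μ| ^ p ≤ ‖θ‖₁ * |μ| ^ p < |μ| ^ p`.
-/

open Matrix Module.End

theorem Matrix.exists_mulVec_eq_smul_of_mem_spectrum {K n : Type*} [Field K] [Fintype n]
    [DecidableEq n] {A : Matrix n n K} {μ : K} (h : μ ∈ spectrum K A) :
    ∃ v ≠ 0, A *ᵥ v = μ • v := by
  rw [← Matrix.spectrum_toLin', ← hasEigenvalue_iff_mem_spectrum] at h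
  obtain ⟨v, hv⟩ := h.exists_hasEigenvector
  exact ⟨v, hv.2, hv.apply_eq_smul⟩

section ShiftRows

variable {K : Type*} [Field K] {n : ℕ} {C : Matrix (Fin (n + 1)) (Fin (n + 1)) K}

theorem eigenvector_apply_of_shift_rows (hshift : ∀ i : Fin n, C i.succ = Pi.single i.castSucc 1)
    {μ : K} {v : Fin (n + 1) → K} (hv : C *ᵥ v = μ • v) (j : Fin (n + 1)) :
    v j = μ ^ (n - j : ℕ) * v (Fin.last n) := by
  induction j using Fin.reverseInduction with
  | last => simp
  | cast i ih =>
    have hrow : v i.castSucc = μ * v i.succ := by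
      simpa [Matrix.mulVec, hshift] using congrFun hv i.succ
    rw [hrow, ih, ← mul_assoc, ← pow_succ']
    congr 2
    simp only [Fin.val_succ, Fin.val_castSucc]
    omega

theorem sum_first_row_mul_pow_of_mem_spectrum
    (hshift : ∀ i : Fin n, C i.succ = Pi.single i.castSucc 1) {μ : K} (hμ : μ ∈ spectrum K C) :
    ∑ j, C 0 j * μ ^ (n - j : ℕ) = μ ^ (n + 1) := by
  obtain ⟨v, hv0, hv⟩ := exists_mulVec_eq_smul_of_mem_spectrum hμ
  have hval := eigenvector_apply_of_shift_rows hshift hv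
  have hlast : v (Fin.last n) ≠ 0 := fun h => hv0 (funext fun j => by simp [hval j, h])
  have hrow0 : ∑ j, C 0 j * v j = μ * v 0 := congrFun hv 0
  apply mul_right_cancel₀ hlast
  calc (∑ j, C 0 j * μ ^ (n - j : ℕ)) * v (Fin.last n) = ∑ j, C 0 j * v j := by
        simp only [Finset.sum_mul, mul_assoc, ← hval]
    _ = μ ^ (n + 1) * v (Fin.last n) := by rw [hrow0, hval 0, pow_succ', mul_assoc]; rfl

end ShiftRows

section RowSums

variable {R : Type*} [CommRing R] {p : ℕ}

theorem sum_snoc_zero_mul_pow (t : Fin p → R) (μ : R) :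
    ∑ j : Fin (p + 1), (Fin.snoc t 0 : Fin (p + 1) → R) j * μ ^ (p - j : ℕ) =
      μ * ∑ k : Fin p, t k * μ ^ (p - 1 - k : ℕ) := by
  rw [Fin.sum_univ_castSucc, Finset.mul_sum]
  simp only [Fin.snoc_castSucc, Fin.snoc_last, zero_mul, add_zero, Fin.val_castSucc]
  refine Finset.sum_congr rfl fun k _ => ?_
  rw [show p - k = p - 1 - k + 1 by omega, pow_succ]
  ring

theorem sum_cons_mul_pow (a : R) (t : Fin p → R) (μ : R) :
    ∑ j : Fin (p + 1), (Fin.cons a t : Fin (p + 1) → R) j * μ ^ (p - j : ℕ) =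
      a * μ ^ p + ∑ k : Fin p, t k * μ ^ (p - 1 - k : ℕ) := by
  rw [Fin.sum_univ_succ]
  simp only [Fin.cons_zero, Fin.cons_succ, Fin.val_zero, Fin.val_succ, Nat.sub_zero]
  congr 2 with k
  rw [Nat.sub_add_eq, Nat.sub_right_comm]

/-- `Fin.snoc t 0 - ρ • Fin.cons (-1) t` is the first row of `C_A`: the coefficient vector of
`(1 - ρ L) (1 - t(L))`. -/
theorem sub_sum_companion_row_mul_pow (t : Fin p → R) (ρ μ : R) :
    μ ^ (p + 1) - ∑ j : Fin (p + 1),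
        ((Fin.snoc t 0 : Fin (p + 1) → R) j - ρ * (Fin.cons (-1) t : Fin (p + 1) → R) j) *
          μ ^ (p - j : ℕ) =
      (μ - ρ) * (μ ^ p - ∑ k : Fin p, t k * μ ^ (p - 1 - k : ℕ)) := by
  simp only [sub_mul, Finset.sum_sub_distrib, mul_assoc, ← Finset.mul_sum,
    sum_snoc_zero_mul_pow, sum_cons_mul_pow]
  ring

end RowSums

theorem norm_lt_one_of_pow_eq_sum {𝕜 : Type*} [NormedField 𝕜] {p : ℕ} (θ : Fin p → 𝕜)
    (hθ : ∑ k, ‖θ k‖ < 1) {μ : 𝕜} (hμ : μ ^ p = ∑ k, θ k * μ ^ (p - 1 - k : ℕ)) : ‖μ‖ < 1 := by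
  by_contra! h
  have hpos : 0 < ‖μ‖ ^ p := pow_pos (one_pos.trans_le h) p
  have : ‖μ‖ ^ p ≤ (∑ k, ‖θ k‖) * ‖μ‖ ^ p :=
    calc ‖μ‖ ^ p = ‖∑ k, θ k * μ ^ (p - 1 - k : ℕ)‖ := by rw [← hμ, norm_pow]
      _ ≤ ∑ k, ‖θ k‖ * ‖μ‖ ^ (p - 1 - k : ℕ) := by
        refine (norm_sum_le _ _).trans_eq ?_
        simp only [norm_mul, norm_pow]
      _ ≤ ∑ k, ‖θ k‖ * ‖μ‖ ^ p := by
        gcongr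
        omega
      _ = (∑ k, ‖θ k‖) * ‖μ‖ ^ p := (Finset.sum_mul ..).symm
  nlinarith

/-- under `‖θ‖₁ < 1` and `|ρ| < 1`, the spectral radius of the
companion matrix `C_A` is strictly less than 1. -/
theorem stmt5 (p : ℕ) (hp : 1 ≤ p) (θ : Fin p → ℝ) (ρ : ℝ)
    (hθ : ∑ k, |θ k| < 1) (hρ : |ρ| < 1)
    (C : Matrix (Fin (p+1)) (Fin (p+1)) ℂ)
    (hC : ∀ i j : Fin (p+1), C i j =
      if i = 0 then
        (if (j : ℕ) = 0 then ((θ ⟨0, hp⟩ + ρ : ℝ) : ℂ)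
         else if hj2 : (j : ℕ) < p then
           ((θ ⟨(j : ℕ), hj2⟩ - θ ⟨(j : ℕ) - 1, by omega⟩ * ρ : ℝ) : ℂ)
         else ((-(θ ⟨p - 1, by omega⟩ * ρ) : ℝ) : ℂ))
      else if (i : ℕ) = (j : ℕ) + 1 then 1 else 0) :
    ∀ μ ∈ spectrum ℂ C, ‖μ‖ < 1 := by
  have hshift : ∀ i : Fin p, C i.succ = Pi.single i.castSucc 1 := fun i => by
    ext j
    rw [hC, if_neg i.succ_ne_zero, Pi.single_apply]
    simp [Fin.ext_iff, eq_comm]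
  have hrow : ∀ j, C 0 j = (Fin.snoc (fun k => (θ k : ℂ)) 0 : Fin (p + 1) → ℂ) j -
      ρ * (Fin.cons (-1) (fun k => (θ k : ℂ)) : Fin (p + 1) → ℂ) j := fun j => by
    rw [hC, if_pos rfl]
    cases j using Fin.cases with
    | zero => simp [Fin.snoc, Fin.castLT, show 0 < p from hp]
    | succ k =>
      simp only [Fin.snoc, Fin.cons_succ, Fin.val_succ, Fin.castLT, add_tsub_cancel_right,
        Nat.add_one_ne_zero, if_false, cast_eq, Fin.eta]
      split_ifs with h
      · push_cast; ring
      · rw [show (⟨p - 1, by omega⟩ : Fin p) = k from Fin.ext (by simp; omega)]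
        push_cast; ring
  intro μ hμ
  have hfactor := sub_sum_companion_row_mul_pow (fun k => (θ k : ℂ)) ρ μ
  simp only [← hrow, sum_first_row_mul_pow_of_mem_spectrum hshift hμ, sub_self, zero_eq_mul,
    sub_eq_zero] at hfactor
  rcases hfactor with rfl | hpow
  · simpa using hρ
  · exact norm_lt_one_of_pow_eq_sum _ (by simpa using hθ) hpow
end

section
/- Let (V_n) be i.i.d. with E[|V₁|^a] < ∞ for some a ≥ 1, and let (X_n) satisfy the stable autoregressive system X_n = ∑_{k=1}^p θ_k X_{n−k} + ε_n, ε_n = ρε_{n−1} + V_n, with ‖θ‖₁ < 1 and |ρ| < 1 and square-integrable initial values. Then almost surely ∑_{k=0}^n |X_k|^a = O(n) and sup_{0≤k≤n} |X_k| = o(n^{1/a}). -/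
open MeasureTheory ProbabilityTheory Filter

/-!
Write `s = ∑ₖ |θₖ| < 1`. The recursion gives `|Xₙ| ≤ ∑ₖ |θₖ| |X_{n-k-1}| + |εₙ|`. Bounding the
lagged values by the running maximum gives `max_{k ≤ n} |X_k| ≤ max_{k ≤ n} |ε_k| / (1 - s)`;
Jensen's inequality for the weights `|θₖ|` and `1 - s`, summed over `n`, gives
`∑_{k ≤ n} |X_k|^a ≤ (1 - s)^(-a) ∑_{k ≤ n} |ε_k|^a`. The noise `ε` is itself such a process, of
order one and driven by `V` with `V₀` replaced by `ε₀`, so both quantities are controlled by the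
same ones for `V`. The strong law of large numbers for `|Vₙ|^a` gives `∑_{k ≤ n} |V_k|^a = O(n)`
and `|Vₙ|^a = o(n)`, hence `max_{k ≤ n} |V_k| = o(n^(1/a))`.
-/

open Finset Asymptotics Topology

theorem Real.rpow_sum_mul_add_le {ι : Type*} [Fintype ι] {w y : ι → ℝ} {z a : ℝ}
    (hw : ∀ i, 0 ≤ w i) (hw_lt : ∑ i, w i < 1) (hy : ∀ i, 0 ≤ y i) (hz : 0 ≤ z) (ha : 1 ≤ a) :
    (∑ i, w i * y i + z) ^ a ≤ ∑ i, w i * y i ^ a + (1 - ∑ i, w i) ^ (1 - a) * z ^ a := by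
  set r := 1 - ∑ i, w i
  have hr : 0 < r := by linarith
  -- Jensen for the weights `w` completed by `r`, the extra point being `z / r`.
  have jensen := Real.rpow_arith_mean_le_arith_mean_rpow univ
    (Option.elim · r w) (Option.elim · (z / r) y)
    (fun i _ => by cases i <;> simp [hr.le, hw]) (by simp [r])
    (fun i _ => by cases i <;> simp [div_nonneg hz hr.le, hy]) ha
  simp only [Fintype.sum_option, Option.elim] at jensen
  rw [mul_div_cancel₀ z hr.ne', Real.div_rpow hz hr.le, mul_div_assoc', mul_div_right_comm]
    at jensen
  rw [Real.rpow_sub hr, Real.rpow_one]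
  rwa [add_comm z, add_comm (r / r ^ a * z ^ a)] at jensen

def runningMax (u : ℕ → ℝ) (N : ℕ) : ℝ :=
  (range (N + 1)).sup' nonempty_range_add_one u

theorem le_runningMax (u : ℕ → ℝ) {k N : ℕ} (hk : k ≤ N) : u k ≤ runningMax u N :=
  le_sup' u (mem_range_succ_iff.2 hk)

theorem runningMax_le {u : ℕ → ℝ} {N : ℕ} {M : ℝ} (h : ∀ k ≤ N, u k ≤ M) :
    runningMax u N ≤ M :=
  sup'_le _ _ fun k hk => h k (mem_range_succ_iff.1 hk)

theorem runningMax_abs_nonneg (u : ℕ → ℝ) (N : ℕ) : 0 ≤ runningMax (|u ·|) N :=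
  (abs_nonneg _).trans (le_runningMax (|u ·|) N.zero_le)

theorem Asymptotics.IsLittleO.runningMax {u b : ℕ → ℝ} (hu : ∀ n, 0 ≤ u n) (hb : Monotone b)
    (hb0 : ∀ n, 0 ≤ b n) (hb_top : Tendsto b atTop atTop) (h : u =o[atTop] b) :
    _root_.runningMax u =o[atTop] b := by
  rw [isLittleO_iff] at h ⊢
  intro c hc
  obtain ⟨N, hN⟩ := eventually_atTop.1 (h hc)
  filter_upwards [hb_top.eventually_ge_atTop (_root_.runningMax u N / c)] with n hbn
  rw [Real.norm_of_nonneg ((hu 0).trans (le_runningMax u n.zero_le)), Real.norm_of_nonneg (hb0 n)]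
  refine runningMax_le fun k hk => ?_
  rcases le_total k N with hkN | hNk
  · exact (le_runningMax u hkN).trans ((div_le_iff₀' hc).1 hbn)
  · have hk_small := hN k hNk
    rw [Real.norm_of_nonneg (hu k), Real.norm_of_nonneg (hb0 k)] at hk_small
    exact hk_small.trans (mul_le_mul_of_nonneg_left (hb hk) hc.le)

section AR

variable {p : ℕ} {θ : Fin p → ℝ} {x f : ℕ → ℝ}

def arLag (θ : Fin p → ℝ) (x : ℕ → ℝ) (n : ℕ) : ℝ :=
  ∑ k : Fin p, if (k : ℕ) + 1 ≤ n then θ k * x (n - ((k : ℕ) + 1)) else 0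

theorem arLag_zero (θ : Fin p → ℝ) (x : ℕ → ℝ) : arLag θ x 0 = 0 := by
  simp [arLag]

theorem arLag_const_fin_one (ρ : ℝ) (x : ℕ → ℝ) (n : ℕ) :
    arLag (fun _ : Fin 1 => ρ) x (n + 1) = ρ * x n := by
  simp [arLag]

theorem arLag_eq_sum_mul (θ : Fin p → ℝ) (x : ℕ → ℝ) (n : ℕ) :
    arLag θ x n = ∑ k, θ k * if (k : ℕ) + 1 ≤ n then x (n - ((k : ℕ) + 1)) else 0 := by
  simp only [arLag, mul_ite, mul_zero]

theorem abs_arLag_le (θ : Fin p → ℝ) (x : ℕ → ℝ) (n : ℕ) :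
    |arLag θ x n| ≤ arLag (|θ ·|) (|x ·|) n :=
  (abs_sum_le_sum_abs _ _).trans <| sum_le_sum fun k _ => by split_ifs <;> simp [abs_mul]

theorem arLag_le_mul {n : ℕ} {M : ℝ} (hθ : ∀ k, 0 ≤ θ k) (hM : 0 ≤ M)
    (hx : ∀ m < n, x m ≤ M) : arLag θ x n ≤ (∑ k, θ k) * M := by
  rw [sum_mul]
  refine sum_le_sum fun k _ => ?_
  split_ifs
  · exact mul_le_mul_of_nonneg_left (hx _ (by omega)) (hθ k)
  · exact mul_nonneg (hθ k) hM

theorem sum_range_arLag_le (hθ : ∀ k, 0 ≤ θ k) (hx : ∀ m, 0 ≤ x m) (N : ℕ) :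
    ∑ n ∈ range N, arLag θ x n ≤ (∑ k, θ k) * ∑ n ∈ range N, x n := by
  simp only [arLag]
  rw [sum_comm, sum_mul]
  refine sum_le_sum fun k _ => ?_
  rw [← sum_filter, ← mul_sum]
  refine mul_le_mul_of_nonneg_left ?_ (hθ k)
  have hfilter : (range N).filter (fun n => (k : ℕ) + 1 ≤ n) = Ico ((k : ℕ) + 1) N := by
    ext n; simp [and_comm]
  rw [hfilter, sum_Ico_eq_sum_range]
  simp only [add_tsub_cancel_left]
  exact sum_le_sum_of_subset_of_nonneg (range_subset_range.2 (Nat.sub_le _ _)) fun i _ _ => hx i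

theorem abs_le_of_ar (hx : ∀ n, x n = arLag θ x n + f n) (hθ : ∑ k, |θ k| < 1) {N : ℕ} {F : ℝ}
    (hF : ∀ m ≤ N, |f m| ≤ F) : ∀ m ≤ N, |x m| ≤ F / (1 - ∑ k, |θ k|) := by
  have hs : 0 < 1 - ∑ k, |θ k| := by linarith
  have hF0 : 0 ≤ F := (abs_nonneg _).trans (hF 0 N.zero_le)
  intro m
  induction m using Nat.strong_induction_on with
  | _ m ih =>
    intro hm
    have hlag := arLag_le_mul (fun k => abs_nonneg (θ k)) (div_nonneg hF0 hs.le)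
      fun j hj => ih j hj (by omega)
    calc |x m| ≤ |arLag θ x m| + |f m| := hx m ▸ abs_add_le _ _
      _ ≤ (∑ k, |θ k|) * (F / (1 - ∑ k, |θ k|)) + F :=
        add_le_add ((abs_arLag_le θ x m).trans hlag) (hF m hm)
      _ = F / (1 - ∑ k, |θ k|) := by field_simp; ring

theorem runningMax_abs_le_of_ar (hx : ∀ n, x n = arLag θ x n + f n) (hθ : ∑ k, |θ k| < 1)
    (N : ℕ) : runningMax (|x ·|) N ≤ runningMax (|f ·|) N / (1 - ∑ k, |θ k|) :=
  runningMax_le <| abs_le_of_ar hx hθ fun _ hm => le_runningMax (|f ·|) hm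

theorem isLittleO_runningMax_abs_of_ar (hx : ∀ n, x n = arLag θ x n + f n)
    (hθ : ∑ k, |θ k| < 1) {b : ℕ → ℝ} (hf : runningMax (|f ·|) =o[atTop] b) :
    runningMax (|x ·|) =o[atTop] b := by
  refine IsBigO.trans_isLittleO (.of_bound (1 - ∑ k, |θ k|)⁻¹ (.of_forall fun N => ?_)) hf
  rw [Real.norm_of_nonneg (runningMax_abs_nonneg x N),
    Real.norm_of_nonneg (runningMax_abs_nonneg f N)]
  exact (runningMax_abs_le_of_ar hx hθ N).trans_eq (div_eq_inv_mul _ _)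

theorem sum_range_rpow_abs_le_of_ar (hx : ∀ n, x n = arLag θ x n + f n)
    (hθ : ∑ k, |θ k| < 1) {a : ℝ} (ha : 1 ≤ a) (N : ℕ) :
    ∑ n ∈ range N, |x n| ^ a ≤ (1 - ∑ k, |θ k|) ^ (-a) * ∑ n ∈ range N, |f n| ^ a := by
  set s := ∑ k, |θ k|
  have hs : 0 < 1 - s := by linarith
  have hpoint : ∀ n,
      |x n| ^ a ≤ arLag (|θ ·|) (|x ·| ^ a) n + (1 - s) ^ (1 - a) * |f n| ^ a := by
    intro n
    have hx_le : |x n| ≤ arLag (|θ ·|) (|x ·|) n + |f n| :=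
      (hx n ▸ abs_add_le _ _).trans (add_le_add_left (abs_arLag_le θ x n) _)
    refine (Real.rpow_le_rpow (abs_nonneg _) hx_le (by linarith)).trans ?_
    rw [arLag_eq_sum_mul, arLag_eq_sum_mul]
    have jensen := Real.rpow_sum_mul_add_le (fun k => abs_nonneg (θ k)) hθ
      (y := fun k : Fin p => if (k : ℕ) + 1 ≤ n then |x (n - ((k : ℕ) + 1))| else 0)
      (fun k => by split_ifs <;> simp) (abs_nonneg (f n)) ha
    simpa only [apply_ite (· ^ a), Real.zero_rpow (by linarith : a ≠ 0)] using jensen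
  have hsum := sum_le_sum fun n (_ : n ∈ range N) => hpoint n
  rw [sum_add_distrib, ← mul_sum] at hsum
  have hlag := sum_range_arLag_le (fun k => abs_nonneg (θ k)) (x := (|x ·| ^ a))
    (fun m => by positivity) N
  have hexp : (1 - s) ^ (1 - a) = (1 - s) * (1 - s) ^ (-a) := by
    rw [show 1 - a = 1 + -a by ring, Real.rpow_add hs, Real.rpow_one]
  rw [hexp] at hsum
  refine le_of_mul_le_mul_left ?_ hs
  linarith

theorem exists_sum_range_rpow_le_of_ar (hx : ∀ n, x n = arLag θ x n + f n)
    (hθ : ∑ k, |θ k| < 1) {a : ℝ} (ha : 1 ≤ a)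
    (hf : ∃ B : ℝ, ∀ N : ℕ, ∑ n ∈ range (N + 1), |f n| ^ a ≤ B * (N + 1)) :
    ∃ C : ℝ, ∀ N : ℕ, ∑ n ∈ range (N + 1), |x n| ^ a ≤ C * (N + 1) := by
  obtain ⟨B, hB⟩ := hf
  refine ⟨(1 - ∑ k, |θ k|) ^ (-a) * B, fun N => ?_⟩
  rw [mul_assoc]
  exact (sum_range_rpow_abs_le_of_ar hx hθ ha _).trans (by gcongr; exact hB N)

end AR

section Cesaro

variable {g : ℕ → ℝ} {m : ℝ}

theorem isLittleO_natCast_of_tendsto_sum_range_div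
    (h : Tendsto (fun n => (∑ i ∈ range n, g i) / n) atTop (𝓝 m)) :
    g =o[atTop] fun n => (n : ℝ) := by
  refine (isLittleO_iff_tendsto' ?_).2 ?_
  · filter_upwards [eventually_ge_atTop 1] with n hn h0
    exact absurd h0 (by positivity)
  set G := fun n : ℕ => (∑ i ∈ range n, g i) / n
  have hG_succ : Tendsto (fun n => G (n + 1)) atTop (𝓝 m) := h.comp (tendsto_add_atTop_nat 1)
  -- `g n` is the increment of `n ↦ n G n`, so `g n / n = G (n + 1) - G n + G (n + 1) / n`.
  have hlim := (hG_succ.sub h).add (hG_succ.mul (tendsto_inv_atTop_nhds_zero_nat (𝕜 := ℝ)))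
  rw [sub_self, mul_zero, add_zero] at hlim
  refine hlim.congr' ?_
  filter_upwards [eventually_ge_atTop 1] with n hn
  simp only [G, sum_range_succ, Nat.cast_add_one]
  field_simp
  ring

theorem exists_sum_range_succ_le_mul_of_tendsto
    (h : Tendsto (fun n => (∑ i ∈ range n, g i) / n) atTop (𝓝 m)) :
    ∃ B : ℝ, ∀ N : ℕ, ∑ n ∈ range (N + 1), g n ≤ B * (N + 1) := by
  obtain ⟨B, hB⟩ := h.bddAbove_range
  refine ⟨B, fun N => ?_⟩
  have hN := hB (Set.mem_range_self (N + 1))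
  rwa [Nat.cast_add_one, div_le_iff₀ (by positivity)] at hN

theorem tendsto_sum_range_update_zero_div (c : ℝ)
    (h : Tendsto (fun n => (∑ i ∈ range n, g i) / n) atTop (𝓝 m)) :
    Tendsto (fun n => (∑ i ∈ range n, Function.update g 0 c i) / n) atTop (𝓝 m) := by
  have hlim := h.add ((tendsto_const_nhds (x := c - g 0)).mul
    (tendsto_inv_atTop_nhds_zero_nat (𝕜 := ℝ)))
  rw [mul_zero, add_zero] at hlim
  refine hlim.congr' ?_
  filter_upwards [eventually_ge_atTop 1] with n hn
  obtain ⟨n, rfl⟩ := Nat.exists_eq_add_of_le' hn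
  simp only [sum_range_succ', Function.update_self, Function.update_of_ne (Nat.succ_ne_zero _)]
  field_simp
  ring

theorem isLittleO_runningMax_abs_of_tendsto_sum_range_rpow_div {a : ℝ} (ha : 0 < a)
    (h : Tendsto (fun n => (∑ i ∈ range n, |g i| ^ a) / n) atTop (𝓝 m)) :
    runningMax (|g ·|) =o[atTop] fun n => (n : ℝ) ^ (1 / a) := by
  have hpow := (isLittleO_natCast_of_tendsto_sum_range_div h).rpow (one_div_pos.2 ha)
    (.of_forall fun n => n.cast_nonneg)
  refine IsLittleO.runningMax (fun n => abs_nonneg _)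
    (fun i j hij => Real.rpow_le_rpow i.cast_nonneg (Nat.cast_le.2 hij) (by positivity))
    (fun n => by positivity) ((tendsto_rpow_atTop (by positivity)).comp tendsto_natCast_atTop_atTop)
    (hpow.congr_left fun n => ?_)
  rw [one_div, Real.rpow_rpow_inv (abs_nonneg _) ha.ne']

end Cesaro

theorem ar_growth_of_tendsto_sum_range_rpow_div {p : ℕ} {θ : Fin p → ℝ} {ρ a m : ℝ}
    {x e v : ℕ → ℝ} (hθ : ∑ k, |θ k| < 1) (hρ : |ρ| < 1) (ha : 1 ≤ a) (hx0 : x 0 = e 0)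
    (hx : ∀ n, 1 ≤ n → x n = arLag θ x n + e n) (he : ∀ n, 1 ≤ n → e n = ρ * e (n - 1) + v n)
    (hv : Tendsto (fun n : ℕ => (∑ i ∈ range n, |v i| ^ a) / n) atTop (𝓝 m)) :
    (∃ C : ℝ, ∀ n : ℕ, ∑ k ∈ range (n + 1), |x k| ^ a ≤ C * ((n : ℝ) + 1)) ∧
      Tendsto (fun n : ℕ => runningMax (|x ·|) n / (n : ℝ) ^ (1 / a)) atTop (𝓝 0) := by
  set f := Function.update v 0 (e 0)
  have hx' : ∀ n, x n = arLag θ x n + e n := by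
    rintro (_ | n)
    · simp [arLag_zero, hx0]
    · exact hx _ n.succ_pos
  have he' : ∀ n, e n = arLag (fun _ : Fin 1 => ρ) e n + f n := by
    rintro (_ | n)
    · simp [f, arLag_zero]
    · simpa [f, arLag_const_fin_one] using he _ n.succ_pos
  have hρ' : ∑ _ : Fin 1, |ρ| < 1 := by simpa using hρ
  have hf : Tendsto (fun n : ℕ => (∑ i ∈ range n, |f i| ^ a) / n) atTop (𝓝 m) := by
    have hfa : (fun i => |f i| ^ a) = Function.update (fun i => |v i| ^ a) 0 (|e 0| ^ a) := by
      funext i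
      rcases eq_or_ne i 0 with rfl | hi
      · simp [f]
      · simp [f, hi]
    simpa only [hfa] using tendsto_sum_range_update_zero_div (|e 0| ^ a) hv
  refine ⟨exists_sum_range_rpow_le_of_ar hx' hθ ha <| exists_sum_range_rpow_le_of_ar he' hρ' ha <|
      exists_sum_range_succ_le_mul_of_tendsto hf, ?_⟩
  have hf_small := isLittleO_runningMax_abs_of_tendsto_sum_range_rpow_div (by linarith) hf
  exact (isLittleO_runningMax_abs_of_ar hx' hθ
    (isLittleO_runningMax_abs_of_ar he' hρ' hf_small)).tendsto_div_nhds_zero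

theorem stmt11_general {Ω : Type*} [MeasurableSpace Ω] (μ : Measure Ω)
    (p : ℕ) (θ : Fin p → ℝ) (ρ : ℝ)
    (hθ : ∑ k, |θ k| < 1) (hρ : |ρ| < 1)
    (a : ℝ) (ha : 1 ≤ a)
    (V X ε : ℕ → Ω → ℝ)
    (hindep : iIndepFun V μ)
    (hident : ∀ i, IdentDistrib (V i) (V 0) μ μ)
    (hint : Integrable (fun ω => |V 0 ω| ^ a) μ)
    (hX0 : ∀ ω, X 0 ω = ε 0 ω)
    (hX : ∀ ω, ∀ n, 1 ≤ n → X n ω =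
      (∑ k : Fin p, if (k : ℕ) + 1 ≤ n then θ k * X (n - ((k : ℕ) + 1)) ω else 0) + ε n ω)
    (hε : ∀ ω, ∀ n, 1 ≤ n → ε n ω = ρ * ε (n - 1) ω + V n ω) :
    ∀ᵐ ω ∂μ,
      (∃ C : ℝ, ∀ n : ℕ,
        ∑ k ∈ Finset.range (n+1), |X k ω| ^ a ≤ C * ((n : ℝ) + 1))
      ∧ Tendsto (fun n : ℕ =>
          ((Finset.range (n+1)).sup' (Finset.nonempty_range_iff.mpr (Nat.succ_ne_zero n)) fun k => |X k ω|)
            / (n : ℝ) ^ (1 / a))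
        atTop (nhds 0) := by
  have hpow : Measurable fun x : ℝ => |x| ^ a := by fun_prop
  filter_upwards [strong_law_ae_real (fun i ω => |V i ω| ^ a) hint
    (fun i j hij => (hindep.indepFun hij).comp hpow hpow) fun i => (hident i).comp hpow] with ω hω
  exact ar_growth_of_tendsto_sum_range_rpow_div (x := (X · ω)) (e := (ε · ω))
    hθ hρ ha (hX0 ω) (hX ω) (hε ω) hω

/-- for the stable autoregressive process driven by i.i.d. noise with
finite `a`-th moment, a.s. `∑_{k=0}^n |X_k|^a = O(n)` and `sup_{k≤n}|X_k| = o(n^{1/a})`. -/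
theorem stmt11 {Ω : Type*} [MeasurableSpace Ω] (μ : Measure Ω)
    [IsProbabilityMeasure μ]
    (p : ℕ) (hp : 1 ≤ p) (θ : Fin p → ℝ) (ρ : ℝ)
    (hθ : ∑ k, |θ k| < 1) (hρ : |ρ| < 1)
    (a : ℝ) (ha : 1 ≤ a)
    (V X ε : ℕ → Ω → ℝ) (hmeas : ∀ i, Measurable (V i))
    (hindep : iIndepFun V μ)
    (hident : ∀ i, IdentDistrib (V i) (V 0) μ μ)
    (hint : Integrable (fun ω => |V 0 ω| ^ a) μ)
    (hX0 : ∀ ω, X 0 ω = ε 0 ω)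
    (hmem : MemLp (X 0) 2 μ)
    (hX : ∀ ω, ∀ n, 1 ≤ n → X n ω =
      (∑ k : Fin p, if (k : ℕ) + 1 ≤ n then θ k * X (n - ((k : ℕ) + 1)) ω else 0) + ε n ω)
    (hε : ∀ ω, ∀ n, 1 ≤ n → ε n ω = ρ * ε (n - 1) ω + V n ω) :
    ∀ᵐ ω ∂μ,
      (∃ C : ℝ, ∀ n : ℕ,
        ∑ k ∈ Finset.range (n+1), |X k ω| ^ a ≤ C * ((n : ℝ) + 1))
      ∧ Tendsto (fun n : ℕ =>
          ((Finset.range (n+1)).sup' (Finset.nonempty_range_iff.mpr (Nat.succ_ne_zero n)) fun k => |X k ω|)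
            / (n : ℝ) ^ (1 / a))
        atTop (nhds 0) :=
  stmt11_general μ p θ ρ hθ hρ a ha V X ε hindep hident hint hX0 hX hε
end

section
/- For p = 1, with |θ| < 1, |ρ| < 1, the asymptotic variance Σ_θ = α²(1−θρ)² Δ₁^{-1} equals (1−θ²)(1−θρ)(1−ρ²)/(1+θρ)³, where Δ₁ = λ₀ is the first component of the solution Λ of BΛ = e with B the 3×3 matrix with rows (1, −(θ+ρ), θρ), (−(θ+ρ), 1+θρ, 0), (θρ, −(θ+ρ), 1). -/
open Matrix

/-! Cramer's rule gives `λ₀ · det B = (adj B)₀₀`, where `det B = (1 - θρ)(1 - θ²)(1 - ρ²)` and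
`(adj B)₀₀ = 1 + θρ`; the claimed formula is this identity rearranged. -/

/-- The coefficients are the first row of `adj B`. -/
lemma first_coord_mul_det_eq {R : Type*} [CommRing R] (θ ρ : R) (Λ : Fin 3 → R)
    (hΛ : (!![(1 : R), -(θ + ρ), θ * ρ;
              -(θ + ρ), 1 + θ * ρ, 0;
              θ * ρ, -(θ + ρ), 1]) *ᵥ Λ = ![1, 0, 0]) :
    Λ 0 * ((1 - θ * ρ) * ((1 - θ ^ 2) * (1 - ρ ^ 2))) = 1 + θ * ρ := by
  have h0 := congrFun hΛ 0
  have h1 := congrFun hΛ 1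
  have h2 := congrFun hΛ 2
  simp only [mulVec, dotProduct, Fin.sum_univ_three, of_apply, cons_val', cons_val_zero,
    cons_val_one, cons_val_two, empty_val', cons_val_fin_one, tail_cons, vecHead] at h0 h1 h2
  linear_combination (1 + θ * ρ) * h0 + (θ + ρ) * (1 - θ * ρ) * h1 - θ * ρ * (1 + θ * ρ) * h2

lemma sq_div_sq_mul_div_eq {K : Type*} [Field K] {a b c x : K} (h : x * (a * c) = b) :
    (1 / (a * b)) ^ 2 * a ^ 2 / x = a * c / b ^ 3 := by
  subst h
  rcases eq_or_ne (x * (a * c)) 0 with hb | hb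
  · simp [hb]
  have hx : x ≠ 0 := left_ne_zero_of_mul hb
  have ha : a ≠ 0 := left_ne_zero_of_mul (right_ne_zero_of_mul hb)
  have hc : c ≠ 0 := right_ne_zero_of_mul (right_ne_zero_of_mul hb)
  field_simp

theorem stmt14_general (θ ρ : ℝ)
    (Λ : Fin 3 → ℝ)
    (hΛ : (!![(1 : ℝ), -(θ + ρ), θ * ρ;
              -(θ + ρ), 1 + θ * ρ, 0;
              θ * ρ, -(θ + ρ), 1]) *ᵥ Λ = ![1, 0, 0]) :
    ((1 / ((1 - θ * ρ) * (1 + θ * ρ))) ^ 2 * (1 - θ * ρ) ^ 2) / (Λ 0)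
      = (1 - θ ^ 2) * (1 - θ * ρ) * (1 - ρ ^ 2) / (1 + θ * ρ) ^ 3 := by
  rw [sq_div_sq_mul_div_eq (first_coord_mul_det_eq θ ρ Λ hΛ)]
  ring

/-- for `p = 1`, `Σ_θ = α²(1−θρ)²/λ₀ = (1−θ²)(1−θρ)(1−ρ²)/(1+θρ)³`,
where `λ₀` is the first component of the solution of `BΛ = e`. -/
theorem stmt14 (θ ρ : ℝ) (hθ : |θ| < 1) (hρ : |ρ| < 1)
    (Λ : Fin 3 → ℝ)
    (hΛ : (!![(1 : ℝ), -(θ + ρ), θ * ρ;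
              -(θ + ρ), 1 + θ * ρ, 0;
              θ * ρ, -(θ + ρ), 1]) *ᵥ Λ = ![1, 0, 0]) :
    ((1 / ((1 - θ * ρ) * (1 + θ * ρ))) ^ 2 * (1 - θ * ρ) ^ 2) / (Λ 0)
      = (1 - θ ^ 2) * (1 - θ * ρ) * (1 - ρ ^ 2) / (1 + θ * ρ) ^ 3 :=
  stmt14_general θ ρ Λ hΛ
end

section
/- For p = 1 and |θ| < 1, |ρ| < 1, the asymptotic variance of the serial correlation estimator satisfies σ_ρ² = (1−θρ)/(1+θρ)³ · ((θ+ρ)²(1+θρ)² + (θρ)²(1−θ²)(1−ρ²)), obtained from σ_ρ² = P_Lᵀ Δ₁ P_L − 2α^{-1}θ* λ₁ P_L + (α^{-1}θ*)² λ₀ with the explicit p=1 values α = ((1−θρ)(1+θρ))^{-1}, θ* = (θ+ρ)/(1+θρ), Δ₂ = [[λ₀, λ₁],[λ₁, λ₀]], Λ = B^{-1}e as in the p=1 system. -/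
open Matrix

/-! The p = 1 system `B Λ = e` can be solved by elimination: with
`D = (1 - θρ)(1 - θ²)(1 - ρ²)` one gets `λ₀ = (1 + θρ)/D` and `λ₁ = (θ + ρ)/D`.
Substituting these into the quadratic form defining `σ_ρ²` leaves a rational identity in `θ, ρ`,
whose denominators `1 ± θρ`, `1 - θ²`, `1 - ρ²` are nonzero because `|θ|, |ρ| < 1`. -/

theorem lambda_eq_of_mulVec_eq {K : Type*} [Field K] (θ ρ : K) (hθρ : 1 + θ * ρ ≠ 0)
    (hD : (1 - θ * ρ) * (1 - θ ^ 2) * (1 - ρ ^ 2) ≠ 0) (Λ : Fin 3 → K)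
    (hΛ : (!![(1 : K), -(θ + ρ), θ * ρ;
              -(θ + ρ), 1 + θ * ρ, 0;
              θ * ρ, -(θ + ρ), 1]) *ᵥ Λ = ![1, 0, 0]) :
    Λ 0 = (1 + θ * ρ) / ((1 - θ * ρ) * (1 - θ ^ 2) * (1 - ρ ^ 2)) ∧
      Λ 1 = (θ + ρ) / ((1 - θ * ρ) * (1 - θ ^ 2) * (1 - ρ ^ 2)) := by
  have e0 := congrFun hΛ 0
  have e1 := congrFun hΛ 1
  have e2 := congrFun hΛ 2
  simp only [mulVec, dotProduct, Fin.sum_univ_three, of_apply, cons_val', cons_val_fin_one,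
    cons_val_zero, cons_val_one, cons_val] at e0 e1 e2
  have hΛ0 : Λ 0 * ((1 - θ * ρ) * (1 - θ ^ 2) * (1 - ρ ^ 2)) = 1 + θ * ρ := by
    linear_combination (1 + θ * ρ) * e0 + (θ + ρ) * (1 - θ * ρ) * e1 - θ * ρ * (1 + θ * ρ) * e2
  refine ⟨(eq_div_iff hD).mpr hΛ0, (eq_div_iff hD).mpr (mul_left_cancel₀ hθρ ?_)⟩
  linear_combination ((1 - θ * ρ) * (1 - θ ^ 2) * (1 - ρ ^ 2)) * e1 + (θ + ρ) * hΛ0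

theorem abs_mul_lt_one {a b : ℝ} (ha : |a| < 1) (hb : |b| < 1) : |a * b| < 1 := by
  rw [abs_mul]
  exact mul_lt_one_of_nonneg_of_lt_one_left (abs_nonneg a) ha hb.le

/-- closed form of the asymptotic variance `σ_ρ²` for `p = 1`. -/
theorem stmt18 (θ ρ : ℝ) (hθ : |θ| < 1) (hρ : |ρ| < 1)
    (Λ : Fin 3 → ℝ)
    (hΛ : (!![(1 : ℝ), -(θ + ρ), θ * ρ;
              -(θ + ρ), 1 + θ * ρ, 0;
              θ * ρ, -(θ + ρ), 1]) *ᵥ Λ = ![1, 0, 0])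
    (α θs PL σρ2 : ℝ)
    (hα : α = 1 / ((1 - θ * ρ) * (1 + θ * ρ)))
    (hθs : θs = (θ + ρ) / (1 + θ * ρ))
    (hPL : PL = (1 - θ * ρ) * (α * θ * ρ / (Λ 0) + θs * (θ + ρ)))
    (hσ : σρ2 = PL ^ 2 * Λ 0 - 2 * α⁻¹ * θs * (Λ 1) * PL + (α⁻¹ * θs) ^ 2 * Λ 0) :
    σρ2 = (1 - θ * ρ) / (1 + θ * ρ) ^ 3
      * ((θ + ρ) ^ 2 * (1 + θ * ρ) ^ 2 + (θ * ρ) ^ 2 * (1 - θ ^ 2) * (1 - ρ ^ 2)) := by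
  obtain ⟨hθρ_gt, hθρ_lt⟩ := abs_lt.mp (abs_mul_lt_one hθ hρ)
  have hθ2 : 1 - θ ^ 2 ≠ 0 := sub_ne_zero.mpr ((sq_lt_one_iff_abs_lt_one θ).mpr hθ).ne'
  have hρ2 : 1 - ρ ^ 2 ≠ 0 := sub_ne_zero.mpr ((sq_lt_one_iff_abs_lt_one ρ).mpr hρ).ne'
  have h1p : 1 + θ * ρ ≠ 0 := by linarith
  have h1m : 1 - θ * ρ ≠ 0 := by linarith
  obtain ⟨hΛ0, hΛ1⟩ := lambda_eq_of_mulVec_eq θ ρ h1p (mul_ne_zero (mul_ne_zero h1m hθ2) hρ2) Λ hΛ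
  rw [hσ, hPL, hα, hθs, hΛ0, hΛ1]
  field_simp
  ring
end
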